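/- arXiv:2301.12274 — 4 statements merged into one kernel-verified Lean document; each statement's English description precedes it below -/
import Mathlib

section
/- Suppose for a set S ⊆ V of a hypergraph H with generalized cut function and positive node weights π, and a set R with η = π(R)/π(V\R) ≤ 1, the inequality (1/α)·cut_H(S) + π(R ∩ (V\S)) + η·π((V\R) ∩ S) < π(R) holds for some α > 0. Then the π-expansion of S satisfies φ_H(S, π) = cut_H(S) / min{π(S), π(V\S)} < α. -/
open Finset

/-- If `(1/α)·cut_H(S) + π(R ∩ (V\S)) + η·π((V\R) ∩ S) < π(R)` for some
`α > 0`, where `η = π(R)/π(V\R) ≤ 1`, then the `π`-expansion of `S` satisfies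
`cut_H(S) / min{π(S), π(V\S)} < α`. -/
theorem small_cut_gives_small_expansion {V : Type*} [Fintype V] [DecidableEq V]
    (cutH : Finset V → ℝ) (hcut : ∀ S, 0 ≤ cutH S)
    (π : V → ℝ) (hπ : ∀ v, 0 < π v) (R S : Finset V)
    (hRpos : 0 < ∑ v ∈ R, π v)
    (hRle : ∑ v ∈ R, π v ≤ ∑ v ∈ Rᶜ, π v)
    (α : ℝ) (hα : 0 < α)
    (h : (1 / α) * cutH S + (∑ v ∈ R ∩ Sᶜ, π v) +
          ((∑ v ∈ R, π v) / (∑ v ∈ Rᶜ, π v)) * (∑ v ∈ Rᶜ ∩ S, π v)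
        < ∑ v ∈ R, π v) :
    cutH S / min (∑ v ∈ S, π v) (∑ v ∈ Sᶜ, π v) < α := by
  have hsplit : ∀ A B : Finset V,
      ∑ v ∈ A ∩ B, π v + ∑ v ∈ A ∩ Bᶜ, π v = ∑ v ∈ A, π v := by
    intro A B
    rw [show A ∩ Bᶜ = A \ B from by ext v; simp]
    exact Finset.sum_inter_add_sum_sdiff A B π
  set a := ∑ v ∈ R ∩ S, π v with ha
  set b := ∑ v ∈ R ∩ Sᶜ, π v with hb
  set c := ∑ v ∈ Rᶜ ∩ S, π v with hc
  set d := ∑ v ∈ Rᶜ ∩ Sᶜ, π v with hd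
  have hnn : ∀ T : Finset V, 0 ≤ ∑ v ∈ T, π v :=
    fun T => Finset.sum_nonneg fun v _ => (hπ v).le
  have hR : ∑ v ∈ R, π v = a + b := (hsplit R S).symm
  have hRc : ∑ v ∈ Rᶜ, π v = c + d := (hsplit Rᶜ S).symm
  have hS : ∑ v ∈ S, π v = a + c := by
    rw [← hsplit S R, Finset.inter_comm S R, Finset.inter_comm S Rᶜ]
  have hSc : ∑ v ∈ Sᶜ, π v = b + d := by
    rw [← hsplit Sᶜ R, Finset.inter_comm Sᶜ R, Finset.inter_comm Sᶜ Rᶜ]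
  have hb0 : 0 ≤ b := hnn _
  have hc0 : 0 ≤ c := hnn _
  have hd0 : 0 ≤ d := hnn _
  have hcd : 0 < c + d := by rw [← hRc]; linarith [hRpos, hRle]
  set e := (∑ v ∈ R, π v) / (∑ v ∈ Rᶜ, π v) with he
  have he0 : 0 ≤ e := div_nonneg (hnn _) (hnn _)
  have he1 : e ≤ 1 := by
    rw [he, div_le_one (by rw [hRc]; exact hcd)]; exact hRle
  have hecd : e * (c + d) = a + b := by
    rw [he, hRc, hR, div_mul_cancel₀ _ (ne_of_gt hcd)]
  rw [hR] at h
  -- cut < α * (a - e * c)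
  have hkey : cutH S < α * (a - e * c) := by
    have h2 : (1 / α) * cutH S < a - e * c := by linarith
    have := (mul_lt_mul_iff_right₀ hα).mpr h2
    rw [← mul_assoc, mul_one_div, div_self (ne_of_gt hα), one_mul] at this
    linarith
  have hcut0 := hcut S
  have hec0 : 0 ≤ e * c := mul_nonneg he0 hc0
  -- a - e*c ≤ b + d : since a - e*c = e*d - b ≤ d ≤ b + d
  have hle2 : a - e * c ≤ b + d := by nlinarith
  have hSpos : 0 < ∑ v ∈ S, π v := by rw [hS]; nlinarith
  have hScpos : 0 < ∑ v ∈ Sᶜ, π v := by rw [hSc]; nlinarith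
  rw [div_lt_iff₀ (lt_min hSpos hScpos)]
  rcases min_cases (∑ v ∈ S, π v) (∑ v ∈ Sᶜ, π v) with ⟨hm, _⟩ | ⟨hm, _⟩ <;>
    rw [hm] <;> [rw [hS]; rw [hSc]] <;> nlinarith
end

section
/- Let H = (V,E) be a hypergraph with a generalized cut function and G(H) = (V ∪ A, Ê) an augmented cut preserver, so that for every S ⊆ V, cut_H(S) = min over U ⊆ A of cut_{G(H)}(S ∪ U). If a graph H' = (V, E_{H'}) can be embedded in G(H) with congestion γ, then for every positive node weight function π on V, the hypergraph π-expansion φ_{H,π} is at least (1/γ)·φ_{H',π}. -/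
open Finset

lemma flow_cut_bound {W : Type*} [Fintype W] [DecidableEq W]
    (F : W → W → ℝ) (hF : ∀ i j, 0 ≤ F i j)
    (T : Finset W) (s t : W) (hs : s ∈ T) (ht : t ∉ T)
    (val : ℝ) (hval : (∑ j, F s j) - (∑ i, F i s) = val)
    (hcons : ∀ x, x ≠ s → x ≠ t → (∑ j, F x j) = (∑ i, F i x)) :
    val ≤ ∑ i ∈ T, ∑ j ∈ Tᶜ, F i j := by
  have key : ∑ i ∈ T, ((∑ j, F i j) - (∑ j, F j i)) = val := by
    rw [Finset.sum_eq_single_of_mem s hs]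
    · exact hval
    · intro x hx hxs
      have hxt : x ≠ t := by rintro rfl; exact ht hx
      rw [hcons x hxs hxt]; ring
  have expand : ∑ i ∈ T, ((∑ j, F i j) - (∑ j, F j i))
      = (∑ i ∈ T, ∑ j ∈ Tᶜ, F i j) - (∑ i ∈ T, ∑ j ∈ Tᶜ, F j i) := by
    have h1 : ∀ i, (∑ j, F i j) = (∑ j ∈ T, F i j) + (∑ j ∈ Tᶜ, F i j) := by
      intro i; rw [Finset.sum_add_sum_compl]
    have h2 : ∀ i, (∑ j, F j i) = (∑ j ∈ T, F j i) + (∑ j ∈ Tᶜ, F j i) := by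
      intro i; rw [Finset.sum_add_sum_compl]
    have hcomm : ∑ i ∈ T, ∑ j ∈ T, F i j = ∑ i ∈ T, ∑ j ∈ T, F j i :=
      Finset.sum_comm
    simp only [h1, h2, Finset.sum_sub_distrib, Finset.sum_add_distrib]
    rw [hcomm]; ring
  rw [expand] at key
  have hnn : 0 ≤ ∑ i ∈ T, ∑ j ∈ Tᶜ, F j i :=
    Finset.sum_nonneg fun i _ => Finset.sum_nonneg fun j _ => hF j i
  linarith

/-- Let `H` be a hypergraph on `V` with generalized cut function `cutH`, and let
`G(H)` be an augmented cut preserver on vertex set `V ⊕ A` with directed edge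
weights `wG`, so that for every `S ⊆ V`, `cutH S` is the minimum over `U ⊆ A`
of the directed cut of `S ∪ U` in `G(H)`. If an undirected graph `H'` on `V`
(weights `wH'`) can be embedded in `G(H)` with congestion `γ`, then for every
positive node weight function `π` on `V`, the hypergraph `π`-expansion of `H`
is at least `(1/γ)` times the `π`-expansion of `H'`. -/
theorem hypergraph_expander_embedding_bound
    {V A : Type*} [Fintype V] [Fintype A] [DecidableEq V] [DecidableEq A]
    (cutH : Finset V → ℝ)
    (wG : V ⊕ A → V ⊕ A → ℝ) (hwG : ∀ i j, 0 ≤ wG i j)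
    (hpreserve : ∀ S : Finset V,
      IsLeast {x : ℝ | ∃ U : Finset A,
        x = ∑ u ∈ S.image Sum.inl ∪ U.image Sum.inr,
              ∑ v ∈ (S.image Sum.inl ∪ U.image Sum.inr)ᶜ, wG u v} (cutH S))
    (wH' : V → V → ℝ) (hwH' : ∀ u v, 0 ≤ wH' u v)
    (hwH'symm : ∀ u v, wH' u v = wH' v u)
    (π : V → ℝ) (hπ : ∀ v, 0 < π v)
    (γ : ℝ) (hγ : 0 < γ)
    (hembed : ∀ S : Finset V, ∃ F : V → V → (V ⊕ A) → (V ⊕ A) → ℝ,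
      (∀ u ∈ S, ∀ v ∈ Sᶜ, ∀ i j, 0 ≤ F u v i j) ∧
      (∀ u ∈ S, ∀ v ∈ Sᶜ,
        ((∑ j, F u v (Sum.inl u) j) - (∑ i, F u v i (Sum.inl u)) = wH' u v) ∧
        (∀ x : V ⊕ A, x ≠ Sum.inl u → x ≠ Sum.inl v →
          (∑ j, F u v x j) = (∑ i, F u v i x))) ∧
      (∀ i j, (∑ u ∈ S, ∑ v ∈ Sᶜ, F u v i j) ≤ γ * wG i j)) :
    (1 / γ) * sInf {x : ℝ | ∃ S : Finset V, S.Nonempty ∧ S ≠ Finset.univ ∧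
        x = (∑ u ∈ S, ∑ v ∈ Sᶜ, wH' u v) /
              min (∑ v ∈ S, π v) (∑ v ∈ Sᶜ, π v)}
      ≤ sInf {x : ℝ | ∃ S : Finset V, S.Nonempty ∧ S ≠ Finset.univ ∧
        x = cutH S / min (∑ v ∈ S, π v) (∑ v ∈ Sᶜ, π v)} := by
  set E' : Set ℝ := {x : ℝ | ∃ S : Finset V, S.Nonempty ∧ S ≠ Finset.univ ∧
        x = (∑ u ∈ S, ∑ v ∈ Sᶜ, wH' u v) /
              min (∑ v ∈ S, π v) (∑ v ∈ Sᶜ, π v)} with hE'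
  -- denominators are positive
  have hden : ∀ S : Finset V, S.Nonempty → S ≠ Finset.univ →
      0 < min (∑ v ∈ S, π v) (∑ v ∈ Sᶜ, π v) := by
    intro S hS hSu
    have h1 : 0 < ∑ v ∈ S, π v := Finset.sum_pos (fun v _ => hπ v) hS
    have h2 : 0 < ∑ v ∈ Sᶜ, π v := by
      apply Finset.sum_pos (fun v _ => hπ v)
      rw [Finset.nonempty_iff_ne_empty]
      intro h
      exact hSu (by simpa [Finset.compl_eq_empty_iff] using h)
    exact lt_min h1 h2
  have hE'lb : ∀ x ∈ E', 0 ≤ x := by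
    rintro x ⟨S, hS, hSu, rfl⟩
    apply div_nonneg
    · exact Finset.sum_nonneg fun u _ => Finset.sum_nonneg fun v _ => hwH' u v
    · exact (hden S hS hSu).le
  have hbdd : BddBelow E' := ⟨0, hE'lb⟩
  -- key inequality
  have hkey : ∀ S : Finset V, S.Nonempty → S ≠ Finset.univ →
      (∑ u ∈ S, ∑ v ∈ Sᶜ, wH' u v) ≤ γ * cutH S := by
    intro S hS hSu
    obtain ⟨⟨U, hU⟩, -⟩ := hpreserve S
    obtain ⟨F, hFnn, hFflow, hFcong⟩ := hembed S
    set T : Finset (V ⊕ A) := S.image Sum.inl ∪ U.image Sum.inr with hT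
    have step1 : ∀ u ∈ S, ∀ v ∈ Sᶜ,
        wH' u v ≤ ∑ i ∈ T, ∑ j ∈ Tᶜ, F u v i j := by
      intro u hu v hv
      have hsrc : Sum.inl u ∈ T :=
        Finset.mem_union_left _ (Finset.mem_image_of_mem _ hu)
      have hsink : (Sum.inl v : V ⊕ A) ∉ T := by
        intro h
        rcases Finset.mem_union.mp h with h | h
        · obtain ⟨w, hw, hweq⟩ := Finset.mem_image.mp h
          obtain rfl : w = v := Sum.inl.inj hweq
          exact (Finset.mem_compl.mp hv) hw
        · obtain ⟨w, -, hweq⟩ := Finset.mem_image.mp h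
          exact Sum.inl_ne_inr hweq.symm
      obtain ⟨hval, hcons⟩ := hFflow u hu v hv
      exact flow_cut_bound (F u v) (hFnn u hu v hv) T (Sum.inl u) (Sum.inl v)
        hsrc hsink _ hval hcons
    calc (∑ u ∈ S, ∑ v ∈ Sᶜ, wH' u v)
        ≤ ∑ u ∈ S, ∑ v ∈ Sᶜ, ∑ i ∈ T, ∑ j ∈ Tᶜ, F u v i j := by
          apply Finset.sum_le_sum; intro u hu
          apply Finset.sum_le_sum; intro v hv
          exact step1 u hu v hv
      _ = ∑ i ∈ T, ∑ j ∈ Tᶜ, ∑ u ∈ S, ∑ v ∈ Sᶜ, F u v i j := by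
          calc ∑ u ∈ S, ∑ v ∈ Sᶜ, ∑ i ∈ T, ∑ j ∈ Tᶜ, F u v i j
              = ∑ u ∈ S, ∑ i ∈ T, ∑ v ∈ Sᶜ, ∑ j ∈ Tᶜ, F u v i j :=
                Finset.sum_congr rfl (fun u _ => Finset.sum_comm)
            _ = ∑ i ∈ T, ∑ u ∈ S, ∑ v ∈ Sᶜ, ∑ j ∈ Tᶜ, F u v i j :=
                Finset.sum_comm
            _ = ∑ i ∈ T, ∑ u ∈ S, ∑ j ∈ Tᶜ, ∑ v ∈ Sᶜ, F u v i j :=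
                Finset.sum_congr rfl (fun i _ =>
                  Finset.sum_congr rfl (fun u _ => Finset.sum_comm))
            _ = ∑ i ∈ T, ∑ j ∈ Tᶜ, ∑ u ∈ S, ∑ v ∈ Sᶜ, F u v i j :=
                Finset.sum_congr rfl (fun i _ => Finset.sum_comm)
      _ ≤ ∑ i ∈ T, ∑ j ∈ Tᶜ, γ * wG i j := by
          apply Finset.sum_le_sum; intro i _
          apply Finset.sum_le_sum; intro j _
          exact hFcong i j
      _ = γ * cutH S := by
          rw [hU]; rw [Finset.mul_sum]
          apply Finset.sum_congr rfl; intro i _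
          rw [Finset.mul_sum]
  -- conclude
  rcases Set.eq_empty_or_nonempty E' with hE | hE
  · have hE2 : {x : ℝ | ∃ S : Finset V, S.Nonempty ∧ S ≠ Finset.univ ∧
        x = cutH S / min (∑ v ∈ S, π v) (∑ v ∈ Sᶜ, π v)} = ∅ := by
      rw [Set.eq_empty_iff_forall_notMem]
      rintro x ⟨S, hS, hSu, -⟩
      rw [Set.eq_empty_iff_forall_notMem] at hE
      exact hE _ ⟨S, hS, hSu, rfl⟩
    rw [hE2, hE, Real.sInf_empty]
    simp
  · apply le_csInf
    · obtain ⟨x, S, hS, hSu, -⟩ := hE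
      exact ⟨_, S, hS, hSu, rfl⟩
    · rintro b ⟨S, hS, hSu, rfl⟩
      have h1 : sInf E' ≤ (∑ u ∈ S, ∑ v ∈ Sᶜ, wH' u v) /
          min (∑ v ∈ S, π v) (∑ v ∈ Sᶜ, π v) :=
        csInf_le hbdd ⟨S, hS, hSu, rfl⟩
      have hm := hden S hS hSu
      have h2 : (1/γ) * ((∑ u ∈ S, ∑ v ∈ Sᶜ, wH' u v) /
          min (∑ v ∈ S, π v) (∑ v ∈ Sᶜ, π v))
          ≤ cutH S / min (∑ v ∈ S, π v) (∑ v ∈ Sᶜ, π v) := by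
        rw [div_mul_eq_mul_div, one_mul, div_div]
        rw [div_le_div_iff₀ (by positivity) hm]
        have hk := hkey S hS hSu
        nlinarith [mul_nonneg (sub_nonneg.mpr hk) hm.le]
      calc (1/γ) * sInf E' ≤ (1/γ) * ((∑ u ∈ S, ∑ v ∈ Sᶜ, wH' u v) /
            min (∑ v ∈ S, π v) (∑ v ∈ Sᶜ, π v)) := by
            apply mul_le_mul_of_nonneg_left h1 (by positivity)
        _ ≤ _ := h2
end

section
/- In the CB-gadget for a hyperedge e with parameters a, b > 0 (auxiliary nodes e', e''; directed edges (v,e') and (e'',v) of weight a for each v ∈ e, and edge (e',e'') of weight a·b), for every subset A ⊆ e, the minimum directed cut value of the gadget, taken over all placements of e', e'' on either side, satisfies min_{U ⊆ {e',e''}} cut(A ∪ U) = a·min{|A|, |e\A|, b}. -/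
open Finset

/-- Edge weights of the CB-gadget for a hyperedge `e` with parameters `a, b`:
auxiliary nodes `e' = Sum.inr false` and `e'' = Sum.inr true`; directed edges
`(v, e')` and `(e'', v)` of weight `a` for each `v ∈ e`, and `(e', e'')` of
weight `a·b`. -/
def gadgetWeight {V : Type*} [DecidableEq V] (e : Finset V) (a b : ℝ) :
    V ⊕ Bool → V ⊕ Bool → ℝ
  | Sum.inl v, Sum.inr false => if v ∈ e then a else 0
  | Sum.inr true, Sum.inl v => if v ∈ e then a else 0
  | Sum.inr false, Sum.inr true => a * b
  | _, _ => 0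

/-- Directed cut value of a vertex subset `T` in the CB-gadget graph. -/
def gadgetCut {V : Type*} [Fintype V] [DecidableEq V] (e : Finset V) (a b : ℝ)
    (T : Finset (V ⊕ Bool)) : ℝ :=
  ∑ u ∈ T, ∑ v ∈ Tᶜ, gadgetWeight e a b u v

section Helpers
set_option linter.unusedSectionVars false
set_option linter.unusedVariables false
variable {V : Type*} [Fintype V] [DecidableEq V]

lemma row_inl (e : Finset V) (a b : ℝ) (x : V) (T : Finset (V ⊕ Bool)) :
    ∑ v ∈ Tᶜ, gadgetWeight e a b (Sum.inl x) v
      = if Sum.inr false ∈ T then 0 else (if x ∈ e then a else 0) := by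
  have h : ∀ v, gadgetWeight e a b (Sum.inl x) v
      = if v = Sum.inr false then (if x ∈ e then a else 0) else 0 := by
    rintro (y | (_ | _)) <;> simp [gadgetWeight]
  simp only [h, Finset.sum_ite_eq' Tᶜ, Finset.mem_compl]
  by_cases hf : Sum.inr false ∈ T <;> simp [hf]

lemma row_false (e : Finset V) (a b : ℝ) (T : Finset (V ⊕ Bool)) :
    ∑ v ∈ Tᶜ, gadgetWeight e a b (Sum.inr false) v
      = if Sum.inr true ∈ T then 0 else a * b := by
  have h : ∀ v, gadgetWeight e a b (Sum.inr false) v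
      = if v = Sum.inr true then a * b else 0 := by
    rintro (y | (_ | _)) <;> simp [gadgetWeight]
  simp only [h, Finset.sum_ite_eq' Tᶜ, Finset.mem_compl]
  by_cases hf : Sum.inr true ∈ T <;> simp [hf]

lemma row_true (e : Finset V) (a b : ℝ) (T : Finset (V ⊕ Bool)) :
    ∑ v ∈ Tᶜ, gadgetWeight e a b (Sum.inr true) v
      = a * e.card - ∑ v ∈ T, gadgetWeight e a b (Sum.inr true) v := by
  have := Finset.sum_compl_add_sum T (gadgetWeight e a b (Sum.inr true))
  have huniv : ∑ v, gadgetWeight e a b (Sum.inr true) v = a * e.card := by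
    rw [Fintype.sum_sum_type]
    simp [gadgetWeight, Finset.sum_ite_mem, mul_comm]
  linarith

lemma sum_ite_A (e : Finset V) (a : ℝ) (A : Finset V) (hA : A ⊆ e) :
    ∑ x ∈ A, (if x ∈ e then a else 0) = a * A.card := by
  rw [Finset.sum_ite_mem, Finset.inter_eq_left.mpr hA, Finset.sum_const,
    nsmul_eq_mul, mul_comm]

lemma colsum_true (e : Finset V) (a b : ℝ) (A : Finset V) (hA : A ⊆ e)
    (S : Finset (V ⊕ Bool)) (hS : ∀ x ∈ S, ∀ y, x ≠ Sum.inl y) :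
    ∑ v ∈ A.image Sum.inl ∪ S, gadgetWeight e a b (Sum.inr true) v
      = a * A.card := by
  rw [Finset.sum_union, Finset.sum_image (fun x _ y _ h => Sum.inl_injective h)]
  · have h1 : ∑ x ∈ A, gadgetWeight e a b (Sum.inr true) (Sum.inl x)
        = ∑ x ∈ A, (if x ∈ e then a else 0) := rfl
    have h2 : ∑ v ∈ S, gadgetWeight e a b (Sum.inr true) v = 0 := by
      refine Finset.sum_eq_zero fun v hv => ?_
      rcases v with y | (_ | _)
      · exact absurd rfl (hS _ hv y)
      · rfl
      · rfl
    rw [h1, h2, sum_ite_A e a A hA, add_zero]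
  · rw [Finset.disjoint_left]
    rintro x hx hx'
    obtain ⟨y, _, rfl⟩ := Finset.mem_image.mp hx
    exact hS _ hx' y rfl

lemma cut1 (e : Finset V) (a b : ℝ) (A : Finset V) (hA : A ⊆ e) :
    gadgetCut e a b (A.image Sum.inl) = a * A.card := by
  unfold gadgetCut
  rw [Finset.sum_image (fun x _ y _ h => Sum.inl_injective h)]
  have h1 : ∀ x ∈ A, ∑ v ∈ (A.image Sum.inl)ᶜ, gadgetWeight e a b (Sum.inl x) v
      = if x ∈ e then a else 0 := fun x hx => by rw [row_inl]; simp
  rw [Finset.sum_congr rfl h1, sum_ite_A e a A hA]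

lemma cut2 (e : Finset V) (a b : ℝ) (A : Finset V) (hA : A ⊆ e) :
    gadgetCut e a b (A.image Sum.inl ∪ {Sum.inr false}) = a * b := by
  unfold gadgetCut
  rw [Finset.sum_union (by simp), Finset.sum_image (fun x _ y _ h => Sum.inl_injective h)]
  have h1 : ∀ x ∈ A, ∑ v ∈ (A.image Sum.inl ∪ {Sum.inr false})ᶜ,
      gadgetWeight e a b (Sum.inl x) v = 0 := fun x hx => by rw [row_inl]; simp
  rw [Finset.sum_congr rfl h1, Finset.sum_const_zero, Finset.sum_singleton, row_false]
  simp

lemma cut3 (e : Finset V) (a b : ℝ) (A : Finset V) (hA : A ⊆ e) :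
    gadgetCut e a b (A.image Sum.inl ∪ {Sum.inr true}) = a * e.card := by
  unfold gadgetCut
  rw [Finset.sum_union (by simp), Finset.sum_image (fun x _ y _ h => Sum.inl_injective h)]
  have h1 : ∀ x ∈ A, ∑ v ∈ (A.image Sum.inl ∪ {Sum.inr true})ᶜ,
      gadgetWeight e a b (Sum.inl x) v = if x ∈ e then a else 0 := fun x hx => by
    rw [row_inl]; simp
  rw [Finset.sum_congr rfl h1, sum_ite_A e a A hA, Finset.sum_singleton, row_true,
    colsum_true e a b A hA _ (by rintro x hx y; simp at hx; simp [hx])]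
  ring

lemma cut4 (e : Finset V) (a b : ℝ) (A : Finset V) (hA : A ⊆ e) :
    gadgetCut e a b (A.image Sum.inl ∪ {Sum.inr false, Sum.inr true})
      = a * (e \ A).card := by
  unfold gadgetCut
  rw [Finset.sum_union (by simp), Finset.sum_image (fun x _ y _ h => Sum.inl_injective h)]
  have h1 : ∀ x ∈ A, ∑ v ∈ (A.image Sum.inl ∪ {Sum.inr false, Sum.inr true})ᶜ,
      gadgetWeight e a b (Sum.inl x) v = 0 := fun x hx => by rw [row_inl]; simp
  rw [Finset.sum_congr rfl h1, Finset.sum_const_zero, Finset.sum_pair (by simp),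
    row_false, row_true,
    colsum_true e a b A hA _ (by rintro x hx y; simp at hx; rcases hx with h | h <;> simp [h])]
  have hc : (((e \ A).card : ℕ) : ℝ) = e.card - A.card := by
    rw [Finset.card_sdiff_of_subset hA, Nat.cast_sub (Finset.card_le_card hA)]
  simp only [hc]
  simp
  ring

lemma minlem (k m b : ℝ) (hk : 0 ≤ k) :
    min (min k b) (min (k + m) m) = min (min k m) b := by
  rw [min_eq_right (by linarith : m ≤ k + m), min_assoc, min_comm b m, ← min_assoc]

end Helpers

/-- In the CB-gadget for a hyperedge `e` with parameters `a, b > 0`, for every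
`A ⊆ e` the minimum, over the four placements of the auxiliary nodes `e'` and
`e''`, of the directed cut value of `A` together with those auxiliary nodes
equals `a · min{|A|, |e\A|, b}`. -/

theorem gadget_min_cut {V : Type*} [Fintype V] [DecidableEq V]
    (e : Finset V) (a b : ℝ) (ha : 0 < a) (hb : 0 < b)
    (A : Finset V) (hA : A ⊆ e) :
    min (min (gadgetCut e a b (A.image Sum.inl))
             (gadgetCut e a b (A.image Sum.inl ∪ {Sum.inr false})))
        (min (gadgetCut e a b (A.image Sum.inl ∪ {Sum.inr true}))
             (gadgetCut e a b (A.image Sum.inl ∪ {Sum.inr false, Sum.inr true})))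
      = a * min (min (A.card : ℝ) (((e \ A).card : ℝ))) b := by
  rw [cut1 e a b A hA, cut2 e a b A hA, cut3 e a b A hA, cut4 e a b A hA]
  have he : ((e.card : ℕ) : ℝ) = (A.card : ℝ) + ((e \ A).card : ℝ) := by
    rw [Finset.card_sdiff_of_subset hA, Nat.cast_sub (Finset.card_le_card hA)]; ring
  rw [he, ← mul_min_of_nonneg _ _ ha.le, ← mul_min_of_nonneg _ _ ha.le,
    ← mul_min_of_nonneg _ _ ha.le, minlem _ _ _ (by positivity)]
end

section
/- If for each i in 1..t, α_i > 0 and the graph M_i can be embedded in G(H) with congestion 1/α_i, and sets S_i satisfy φ_H(S_i, π) ≤ 2α_i, and the union H_t = ∪ M_i satisfies φ_{H_t,π} ≥ c·log n while t ≤ C·(log n)^2 for constants c, C > 0, then the best set S* = argmin_i φ_H(S_i,π) satisfies φ_H(S*, π) ≤ (2C/c)·(log n)·φ_{H,π}, i.e., an O(log n) approximation. -/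
open Finset

/-- Graph `M` (weights `wM` on `V`) embeds in the augmented directed graph
`G(H)` (weights `wG` on `V ⊕ A`) with congestion `γ`. -/
def EmbedsInAugmented {V A : Type*} [Fintype V] [Fintype A]
    [DecidableEq V] [DecidableEq A]
    (wG : V ⊕ A → V ⊕ A → ℝ) (wM : V → V → ℝ) (γ : ℝ) : Prop :=
  ∀ S : Finset V, ∃ F : V → V → (V ⊕ A) → (V ⊕ A) → ℝ,
    (∀ u ∈ S, ∀ v ∈ Sᶜ, ∀ i j, 0 ≤ F u v i j) ∧
    (∀ u ∈ S, ∀ v ∈ Sᶜ,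
      ((∑ j, F u v (Sum.inl u) j) - (∑ i, F u v i (Sum.inl u)) = wM u v) ∧
      (∀ x : V ⊕ A, x ≠ Sum.inl u → x ≠ Sum.inl v →
        (∑ j, F u v x j) = (∑ i, F u v i x))) ∧
    (∀ i j, (∑ u ∈ S, ∑ v ∈ Sᶜ, F u v i j) ≤ γ * wG i j)

lemma crossing_lower {V A : Type*} [Fintype V] [Fintype A] [DecidableEq V] [DecidableEq A]
    (T : Finset V) (X : Finset (V ⊕ A)) (hX : ∀ u : V, Sum.inl u ∈ X ↔ u ∈ T)
    (wM : V → V → ℝ)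
    (F : V → V → (V ⊕ A) → (V ⊕ A) → ℝ)
    (hFnn : ∀ u ∈ T, ∀ v ∈ Tᶜ, ∀ i j, 0 ≤ F u v i j)
    (hflow : ∀ u ∈ T, ∀ v ∈ Tᶜ,
      ((∑ j, F u v (Sum.inl u) j) - (∑ i, F u v i (Sum.inl u)) = wM u v) ∧
      (∀ x : V ⊕ A, x ≠ Sum.inl u → x ≠ Sum.inl v →
        (∑ j, F u v x j) = (∑ i, F u v i x))) :
    ∑ u ∈ T, ∑ v ∈ Tᶜ, wM u v ≤ ∑ i ∈ X, ∑ j ∈ Xᶜ, ∑ u ∈ T, ∑ v ∈ Tᶜ, F u v i j := by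
  have swap : ∑ i ∈ X, ∑ j ∈ Xᶜ, ∑ u ∈ T, ∑ v ∈ Tᶜ, F u v i j
      = ∑ u ∈ T, ∑ v ∈ Tᶜ, ∑ i ∈ X, ∑ j ∈ Xᶜ, F u v i j := by
    calc ∑ i ∈ X, ∑ j ∈ Xᶜ, ∑ u ∈ T, ∑ v ∈ Tᶜ, F u v i j
        = ∑ i ∈ X, ∑ u ∈ T, ∑ j ∈ Xᶜ, ∑ v ∈ Tᶜ, F u v i j :=
          Finset.sum_congr rfl fun i _ => Finset.sum_comm
      _ = ∑ u ∈ T, ∑ i ∈ X, ∑ j ∈ Xᶜ, ∑ v ∈ Tᶜ, F u v i j := Finset.sum_comm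
      _ = ∑ u ∈ T, ∑ i ∈ X, ∑ v ∈ Tᶜ, ∑ j ∈ Xᶜ, F u v i j :=
          Finset.sum_congr rfl fun u _ => Finset.sum_congr rfl fun i _ => Finset.sum_comm
      _ = ∑ u ∈ T, ∑ v ∈ Tᶜ, ∑ i ∈ X, ∑ j ∈ Xᶜ, F u v i j :=
          Finset.sum_congr rfl fun u _ => Finset.sum_comm
  rw [swap]
  apply Finset.sum_le_sum; intro u hu
  apply Finset.sum_le_sum; intro v hv
  have huX : Sum.inl u ∈ X := (hX u).mpr hu
  have hvX : Sum.inl v ∉ X := fun h => (Finset.mem_compl.mp hv) ((hX v).mp h)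
  obtain ⟨hnet, hzero⟩ := hflow u hu v hv
  have key : ∑ x ∈ X, ((∑ j, F u v x j) - (∑ i, F u v i x)) = wM u v := by
    rw [Finset.sum_eq_single_of_mem (Sum.inl u) huX]
    · exact hnet
    · intro x hxX hne
      rw [hzero x hne (fun h => hvX (h ▸ hxX))]; ring
  have expand : ∑ x ∈ X, ((∑ j, F u v x j) - (∑ i, F u v i x))
      = (∑ i ∈ X, ∑ j ∈ Xᶜ, F u v i j) - (∑ i ∈ Xᶜ, ∑ j ∈ X, F u v i j) := by
    rw [Finset.sum_sub_distrib]
    have e1 : ∑ x ∈ X, ∑ j, F u v x j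
        = ∑ x ∈ X, ∑ j ∈ X, F u v x j + ∑ x ∈ X, ∑ j ∈ Xᶜ, F u v x j := by
      rw [← Finset.sum_add_distrib]
      exact Finset.sum_congr rfl fun x _ => (Finset.sum_add_sum_compl X _).symm
    have e2 : ∑ x ∈ X, ∑ i, F u v i x
        = ∑ x ∈ X, ∑ i ∈ X, F u v i x + ∑ x ∈ X, ∑ i ∈ Xᶜ, F u v i x := by
      rw [← Finset.sum_add_distrib]
      exact Finset.sum_congr rfl fun x _ => (Finset.sum_add_sum_compl X _).symm
    rw [e1, e2]
    have e3 : ∑ x ∈ X, ∑ j ∈ X, F u v x j = ∑ x ∈ X, ∑ i ∈ X, F u v i x :=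
      Finset.sum_comm
    have e4 : ∑ x ∈ X, ∑ i ∈ Xᶜ, F u v i x = ∑ i ∈ Xᶜ, ∑ x ∈ X, F u v i x :=
      Finset.sum_comm
    rw [e3, e4]; ring
  have hin : 0 ≤ ∑ i ∈ Xᶜ, ∑ j ∈ X, F u v i j :=
    Finset.sum_nonneg fun i _ => Finset.sum_nonneg fun j _ => hFnn u hu v hv i j
  nlinarith [key, expand]

lemma cut_bound {V A : Type*} [Fintype V] [Fintype A] [DecidableEq V] [DecidableEq A]
    (cutH : Finset V → ℝ)
    (wG : V ⊕ A → V ⊕ A → ℝ)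
    (hpreserve : ∀ S : Finset V,
      IsLeast {x : ℝ | ∃ U : Finset A,
        x = ∑ u ∈ S.image Sum.inl ∪ U.image Sum.inr,
              ∑ v ∈ (S.image Sum.inl ∪ U.image Sum.inr)ᶜ, wG u v} (cutH S))
    (wM : V → V → ℝ) (γ : ℝ)
    (hemb : EmbedsInAugmented wG wM γ) (T : Finset V) :
    ∑ u ∈ T, ∑ v ∈ Tᶜ, wM u v ≤ γ * cutH T := by
  obtain ⟨U, hU⟩ := (hpreserve T).1
  set X : Finset (V ⊕ A) := T.image Sum.inl ∪ U.image Sum.inr with hXdef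
  have hX : ∀ u : V, Sum.inl u ∈ X ↔ u ∈ T := by
    intro u; simp [hXdef]
  obtain ⟨F, hFnn, hflow, hcong⟩ := hemb T
  have h1 := crossing_lower T X hX wM F hFnn hflow
  have h2 : ∑ i ∈ X, ∑ j ∈ Xᶜ, ∑ u ∈ T, ∑ v ∈ Tᶜ, F u v i j
      ≤ ∑ i ∈ X, ∑ j ∈ Xᶜ, γ * wG i j := by
    apply Finset.sum_le_sum; intro i _
    apply Finset.sum_le_sum; intro j _
    exact hcong i j
  have h3 : ∑ i ∈ X, ∑ j ∈ Xᶜ, γ * wG i j = γ * cutH T := by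
    rw [hU]
    simp_rw [← Finset.mul_sum]
  linarith

/-- If for each `i ∈ {1,…,t}` we have `α_i > 0`, the bipartite graph `M_i`
embeds in the augmented cut preserver `G(H)` with congestion `1/α_i`, the sets
`S_i` satisfy `φ_H(S_i, π) ≤ 2α_i`, the union `H_t = ∪ M_i` satisfies
`φ_{H_t,π} ≥ c·log n` while `t ≤ C·(log n)²`, then the best set
`S* = argmin_i φ_H(S_i,π)` satisfies
`φ_H(S*,π) ≤ (2C/c)·(log n)·φ_{H,π}`: an `O(log n)` approximation. -/
theorem cut_matching_approximation
    {V A : Type*} [Fintype V] [Fintype A] [DecidableEq V] [DecidableEq A]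
    (cutH : Finset V → ℝ) (hcutH : ∀ S, 0 ≤ cutH S)
    (wG : V ⊕ A → V ⊕ A → ℝ) (hwG : ∀ i j, 0 ≤ wG i j)
    (hpreserve : ∀ S : Finset V,
      IsLeast {x : ℝ | ∃ U : Finset A,
        x = ∑ u ∈ S.image Sum.inl ∪ U.image Sum.inr,
              ∑ v ∈ (S.image Sum.inl ∪ U.image Sum.inr)ᶜ, wG u v} (cutH S))
    (π : V → ℝ) (hπ : ∀ v, 0 < π v)
    (t : ℕ) (ht : 0 < t)
    (α : Fin t → ℝ) (hα : ∀ i, 0 < α i)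
    (M : Fin t → V → V → ℝ)
    (hMnn : ∀ i u v, 0 ≤ M i u v) (hMsymm : ∀ i u v, M i u v = M i v u)
    (hembed : ∀ i, EmbedsInAugmented wG (M i) (1 / α i))
    (S : Fin t → Finset V)
    (hSne : ∀ i, (S i).Nonempty) (hSpr : ∀ i, S i ≠ Finset.univ)
    (hSα : ∀ i, cutH (S i) / min (∑ v ∈ S i, π v) (∑ v ∈ (S i)ᶜ, π v)
        ≤ 2 * α i)
    (c C : ℝ) (hc : 0 < c) (hC : 0 < C)
    (hHt : ∀ T : Finset V, T.Nonempty → T ≠ Finset.univ →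
      c * Real.log (Fintype.card V) ≤
        (∑ u ∈ T, ∑ v ∈ Tᶜ, ∑ i, M i u v) /
          min (∑ v ∈ T, π v) (∑ v ∈ Tᶜ, π v))
    (htC : (t : ℝ) ≤ C * (Real.log (Fintype.card V)) ^ 2) :
    ∃ i : Fin t,
      (∀ j : Fin t,
        cutH (S i) / min (∑ v ∈ S i, π v) (∑ v ∈ (S i)ᶜ, π v)
          ≤ cutH (S j) / min (∑ v ∈ S j, π v) (∑ v ∈ (S j)ᶜ, π v)) ∧
      cutH (S i) / min (∑ v ∈ S i, π v) (∑ v ∈ (S i)ᶜ, π v)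
        ≤ (2 * C / c) * Real.log (Fintype.card V) *
            sInf {x : ℝ | ∃ T : Finset V, T.Nonempty ∧ T ≠ Finset.univ ∧
              x = cutH T / min (∑ v ∈ T, π v) (∑ v ∈ Tᶜ, π v)} := by
    obtain ⟨u0, hu0⟩ := hSne ⟨0, ht⟩
    obtain ⟨w0, hw0⟩ : ∃ w, w ∉ S ⟨0, ht⟩ := by
      by_contra h; push_neg at h
      exact hSpr ⟨0, ht⟩ (Finset.eq_univ_iff_forall.mpr h)
    -- log n > 0
    have hcard : 1 < Fintype.card V :=
      Fintype.one_lt_card_iff_nontrivial.mpr ⟨⟨u0, w0, fun h => hw0 (h ▸ hu0)⟩⟩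
    have hL : 0 < Real.log (Fintype.card V) :=
      Real.log_pos (by exact_mod_cast hcard)
    set L := Real.log (Fintype.card V) with hLdef
    -- min of pi sums is positive
    have hm : ∀ T : Finset V, T.Nonempty → T ≠ Finset.univ →
        0 < min (∑ v ∈ T, π v) (∑ v ∈ Tᶜ, π v) := by
      intro T hT1 hT2
      have hWc : Tᶜ.Nonempty := by
        obtain ⟨w, hw⟩ : ∃ w, w ∉ T := by
          by_contra h; push_neg at h
          exact hT2 (Finset.eq_univ_iff_forall.mpr h)
        exact ⟨w, Finset.mem_compl.mpr hw⟩
      exact lt_min (Finset.sum_pos (fun v _ => hπ v) hT1)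
        (Finset.sum_pos (fun v _ => hπ v) hWc)
    -- minimal alpha
    obtain ⟨istar, -, histar⟩ :=
      Finset.exists_min_image Finset.univ α ⟨⟨0, ht⟩, Finset.mem_univ _⟩
    -- key bound for every nonempty proper T
    have keybound : ∀ T : Finset V, T.Nonempty → T ≠ Finset.univ →
        2 * α istar ≤ (2 * C / c) * L *
          (cutH T / min (∑ v ∈ T, π v) (∑ v ∈ Tᶜ, π v)) := by
      intro T hT1 hT2
      set m := min (∑ v ∈ T, π v) (∑ v ∈ Tᶜ, π v) with hmdef
      have hm0 : 0 < m := hm T hT1 hT2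
      set φT := cutH T / m with hφdef
      have hφ0 : 0 ≤ φT := div_nonneg (hcutH T) hm0.le
      -- each matching cut bound
      have hcut : ∀ i : Fin t, ∑ u ∈ T, ∑ v ∈ Tᶜ, M i u v
          ≤ (1 / α istar) * cutH T := by
        intro i
        have h1 := cut_bound cutH wG hpreserve (M i) (1 / α i) (hembed i) T
        have h2 : (1 / α i) * cutH T ≤ (1 / α istar) * cutH T := by
          apply mul_le_mul_of_nonneg_right _ (hcutH T)
          exact one_div_le_one_div_of_le (hα istar) (histar i (Finset.mem_univ i))
        linarith
      -- union cut bound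
      have hswap : ∑ u ∈ T, ∑ v ∈ Tᶜ, ∑ i, M i u v
          = ∑ i, ∑ u ∈ T, ∑ v ∈ Tᶜ, M i u v := by
        calc ∑ u ∈ T, ∑ v ∈ Tᶜ, ∑ i, M i u v
            = ∑ u ∈ T, ∑ i, ∑ v ∈ Tᶜ, M i u v :=
              Finset.sum_congr rfl fun u _ => Finset.sum_comm
          _ = ∑ i, ∑ u ∈ T, ∑ v ∈ Tᶜ, M i u v := Finset.sum_comm
      have hunion : ∑ u ∈ T, ∑ v ∈ Tᶜ, ∑ i, M i u v
          ≤ (t : ℝ) * ((1 / α istar) * cutH T) := by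
        rw [hswap]
        calc ∑ i, ∑ u ∈ T, ∑ v ∈ Tᶜ, M i u v
            ≤ ∑ _i : Fin t, (1 / α istar) * cutH T :=
              Finset.sum_le_sum fun i _ => hcut i
          _ = (t : ℝ) * ((1 / α istar) * cutH T) := by
              rw [Finset.sum_const, Finset.card_univ, Fintype.card_fin]; ring
      -- expansion lower bound on H_t
      have hHtT := hHt T hT1 hT2
      rw [← hmdef] at hHtT
      have h5 : c * L * m ≤ ∑ u ∈ T, ∑ v ∈ Tᶜ, ∑ i, M i u v :=
        (le_div_iff₀ hm0).mp hHtT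
      have hα0 : 0 < α istar := hα istar
      have h6 : cutH T = φT * m := (div_mul_cancel₀ _ hm0.ne').symm
      have h7 : α istar * (c * L) * m ≤ ((t : ℝ) * φT) * m := by
        have := hunion
        rw [h6] at this
        have h5' : α istar * (c * L * m) ≤ α istar * ((t:ℝ) * (1 / α istar * (φT * m))) := by
          apply mul_le_mul_of_nonneg_left (le_trans h5 this) hα0.le
        have : α istar * ((t:ℝ) * (1 / α istar * (φT * m))) = ((t:ℝ) * φT) * m := by
          field_simp
        linarith [h5', this ▸ h5']
      have h8 : α istar * (c * L) ≤ (t : ℝ) * φT :=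
        le_of_mul_le_mul_right (by linarith) hm0
      have h9 : (t : ℝ) * φT ≤ C * L ^ 2 * φT :=
        mul_le_mul_of_nonneg_right htC hφ0
      have hcL : 0 < c * L := mul_pos hc hL
      have h10 : α istar ≤ C * L ^ 2 * φT / (c * L) := by
        rw [le_div_iff₀ hcL]; linarith
      have h11 : C * L ^ 2 * φT / (c * L) = (C / c) * L * φT := by
        field_simp
      rw [h11] at h10
      calc 2 * α istar ≤ 2 * (C / c * L * φT) := by linarith
        _ = 2 * C / c * L * φT := by ring
    -- argmin of the expansions of the S_i
    obtain ⟨ibest, -, hibest⟩ := Finset.exists_min_image Finset.univ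
      (fun j => cutH (S j) / min (∑ v ∈ S j, π v) (∑ v ∈ (S j)ᶜ, π v))
      ⟨⟨0, ht⟩, Finset.mem_univ _⟩
    refine ⟨ibest, fun j => hibest j (Finset.mem_univ j), ?_⟩
    set K := (2 * C / c) * L with hKdef
    have hK : 0 < K := mul_pos (div_pos (by linarith) hc) hL
    set φb := cutH (S ibest) / min (∑ v ∈ S ibest, π v) (∑ v ∈ (S ibest)ᶜ, π v)
      with hφb
    have hchain : φb ≤ 2 * α istar :=
      le_trans (hibest istar (Finset.mem_univ istar)) (hSα istar)
    have hle : ∀ x ∈ {x : ℝ | ∃ T : Finset V, T.Nonempty ∧ T ≠ Finset.univ ∧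
        x = cutH T / min (∑ v ∈ T, π v) (∑ v ∈ Tᶜ, π v)}, φb ≤ K * x := by
      rintro x ⟨T, hT1, hT2, rfl⟩
      exact le_trans hchain (keybound T hT1 hT2)
    have hne : {x : ℝ | ∃ T : Finset V, T.Nonempty ∧ T ≠ Finset.univ ∧
        x = cutH T / min (∑ v ∈ T, π v) (∑ v ∈ Tᶜ, π v)}.Nonempty :=
      ⟨_, S ⟨0, ht⟩, hSne _, hSpr _, rfl⟩
    have hinf : φb / K ≤ sInf {x : ℝ | ∃ T : Finset V, T.Nonempty ∧ T ≠ Finset.univ ∧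
        x = cutH T / min (∑ v ∈ T, π v) (∑ v ∈ Tᶜ, π v)} := by
      apply le_csInf hne
      intro b hb
      rw [div_le_iff₀ hK, mul_comm]
      exact hle b hb
    have := (div_le_iff₀ hK).mp hinf
    calc φb ≤ sInf _ * K := this
      _ = K * sInf _ := mul_comm _ _
end
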